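/- Let μ > 0 and let B and B1 be independent random variables on a probability space, each distributed according to the exponential distribution with rate μ. Then E[ ∫_ℝ (D_PS(t; B, B1) − B) dt ] = 1/μ². -/

import Mathlib

open MeasureTheory ProbabilityTheory

/-- The conditional sojourn time under Processor Sharing of a tagged job of size `b`
arriving at time `0`, given exactly one other job of the same type with size `b1`
arriving at time `t` (closed form of the piecewise definition in Appendix E). -/
noncomputable def DPS (b b1 t : ℝ) : ℝ :=
  if t ≤ -b1 then b
  else if t ≤ 0 then b + min (b1 + t) b
  else if t ≤ b then b + min b1 (b - t)
  else b

open Set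
open scoped Convolution

/-!
The extra delay `DPS b b1 t - b` equals the length of the overlap of `[0, b]` and
`[t, t + b1]`, the periods each job would hold the server alone; that is the convolution
`(𝟙[0,b] ⋆ 𝟙[-b1,0]) t`. The integral of a convolution is the product of the integrals, so
the inner integral is `B * B1`, and independence gives `E[B * B1] = E[B] * E[B1] = 1/μ²`.
-/

lemma DPS_sub_eq_volume_inter {b b1 : ℝ} (hb : 0 ≤ b) (hb1 : 0 ≤ b1) (t : ℝ) :
    DPS b b1 t - b = volume.real (Icc 0 b ∩ Icc t (t + b1)) := by
  rw [Icc_inter_Icc, Real.volume_real_Icc]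
  unfold DPS
  split_ifs <;> simp only [max_def, min_def] <;> split_ifs <;> linarith

lemma volume_inter_Icc_eq_convolution (b b1 t : ℝ) :
    volume.real (Icc 0 b ∩ Icc t (t + b1)) =
      ((Icc (0 : ℝ) b).indicator 1 ⋆ (Icc (-b1) 0).indicator 1 : ℝ → ℝ) t := by
  have hshift : ∀ s, (Icc (-b1) 0).indicator (1 : ℝ → ℝ) (t - s)
      = (Icc t (t + b1)).indicator 1 s := by
    intro s
    simp only [indicator_apply, mem_Icc, sub_nonpos, neg_le_sub_iff_le_add]
    exact if_congr and_comm rfl rfl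
  rw [convolution_lsmul, ← integral_indicator_one (measurableSet_Icc.inter measurableSet_Icc),
    inter_indicator_one]
  simp only [hshift, smul_eq_mul, Pi.mul_apply]

lemma integral_DPS_sub {b b1 : ℝ} (hb : 0 ≤ b) (hb1 : 0 ≤ b1) :
    ∫ t, (DPS b b1 t - b) = b * b1 := by
  have hint : ∀ a c : ℝ, Integrable ((Icc a c).indicator (1 : ℝ → ℝ)) :=
    fun a c => (integrable_indicator_iff measurableSet_Icc).2
      (integrableOn_const measure_Icc_lt_top.ne)
  simp_rw [DPS_sub_eq_volume_inter hb hb1, volume_inter_Icc_eq_convolution]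
  rw [integral_convolution (L := ContinuousLinearMap.lsmul ℝ ℝ) (hint _ _) (hint _ _)]
  simp [integral_indicator_one, hb, hb1]

lemma expMeasure_Iio_zero (r : ℝ) : expMeasure r (Iio 0) = 0 := by
  rw [expMeasure, gammaMeasure, withDensity_apply _ measurableSet_Iio]
  exact lintegral_exponentialPDF_of_nonpos le_rfl

lemma ae_nonneg_expMeasure (r : ℝ) : ∀ᵐ x ∂expMeasure r, 0 ≤ x := by
  rw [ae_iff]
  simp only [not_le]
  exact expMeasure_Iio_zero r

lemma integral_id_expMeasure {r : ℝ} (hr : 0 < r) : ∫ x, x ∂expMeasure r = 1 / r := by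
  have hdensity : ∀ x, (exponentialPDF r x).toReal • x
      = (Ioi 0).indicator (fun x => r * (x ^ ((2 : ℝ) - 1) * Real.exp (-(r * x)))) x := by
    intro x
    rw [exponentialPDF_eq, smul_eq_mul]
    rcases lt_or_ge 0 x with hx | hx
    · rw [if_pos hx.le, ENNReal.toReal_ofReal (by positivity), indicator_of_mem (mem_Ioi.2 hx),
        show (2 : ℝ) - 1 = 1 by norm_num, Real.rpow_one]
      ring
    · rw [indicator_of_notMem (s := Ioi 0) (not_lt.2 hx)]
      split_ifs with h
      · simp [le_antisymm hx h]
      · simp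
  rw [show expMeasure r = volume.withDensity (exponentialPDF r) from rfl,
    integral_withDensity_eq_integral_toReal_smul (f := exponentialPDF r)
      (measurable_exponentialPDFReal r).ennreal_ofReal (ae_of_all _ fun _ => ENNReal.ofReal_lt_top), integral_congr_ae (ae_of_all _ hdensity),
    integral_indicator measurableSet_Ioi, integral_const_mul,
    Real.integral_rpow_mul_exp_neg_mul_Ioi two_pos hr, Real.Gamma_two, Real.rpow_two]
  field_simp

section ExponentialLaw

variable {Ω : Type*} [MeasurableSpace Ω] {P : Measure Ω} {X : Ω → ℝ} {r : ℝ}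

lemma aemeasurable_of_map_eq_expMeasure (hr : 0 < r) (hlaw : P.map X = expMeasure r) :
    AEMeasurable X P :=
  have := isProbabilityMeasure_expMeasure hr
  aemeasurable_of_map_neZero (hlaw ▸ inferInstance)

lemma ae_nonneg_of_map_eq_expMeasure (hr : 0 < r) (hlaw : P.map X = expMeasure r) :
    ∀ᵐ ω ∂P, 0 ≤ X ω :=
  ae_of_ae_map (aemeasurable_of_map_eq_expMeasure hr hlaw) (hlaw ▸ ae_nonneg_expMeasure r)

lemma integral_eq_of_map_eq_expMeasure (hr : 0 < r) (hlaw : P.map X = expMeasure r) :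
    ∫ ω, X ω ∂P = 1 / r := by
  rw [← integral_id_expMeasure hr, ← hlaw]
  exact (integral_map (aemeasurable_of_map_eq_expMeasure hr hlaw) aestronglyMeasurable_id).symm

end ExponentialLaw

theorem lightTraffic_PS_derivative_general {Ω : Type*} [MeasureSpace Ω]
    (μ : ℝ) (hμ : 0 < μ)
    (B B1 : Ω → ℝ)
    (hind : IndepFun B B1 ℙ)
    (hlawB : Measure.map B ℙ = expMeasure μ)
    (hlawB1 : Measure.map B1 ℙ = expMeasure μ) :
    ∫ ω, (∫ t : ℝ, (DPS (B ω) (B1 ω) t - B ω)) ∂ℙ = 1 / μ ^ 2 := by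
  have hdelay : ∀ᵐ ω ∂ℙ, ∫ t, (DPS (B ω) (B1 ω) t - B ω) = B ω * B1 ω := by
    filter_upwards [ae_nonneg_of_map_eq_expMeasure hμ hlawB,
      ae_nonneg_of_map_eq_expMeasure hμ hlawB1] with ω hb hb1
    exact integral_DPS_sub hb hb1
  rw [integral_congr_ae hdelay,
    hind.integral_fun_mul_eq_mul_integral
      (aemeasurable_of_map_eq_expMeasure hμ hlawB).aestronglyMeasurable
      (aemeasurable_of_map_eq_expMeasure hμ hlawB1).aestronglyMeasurable,
    integral_eq_of_map_eq_expMeasure hμ hlawB, integral_eq_of_map_eq_expMeasure hμ hlawB1]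
  ring

/-- The PS first light-traffic derivative of Lemma 7.1 (up to the factor
`1/(K choose d)`): if `B` and `B1` are independent, each exponentially distributed
with rate `μ`, then `E[∫_ℝ (D_PS(t; B, B1) − B) dt] = 1/μ²`. -/
theorem lightTraffic_PS_derivative {Ω : Type*} [MeasureSpace Ω]
    [IsProbabilityMeasure (ℙ : Measure Ω)]
    (μ : ℝ) (hμ : 0 < μ)
    (B B1 : Ω → ℝ) (hB : Measurable B) (hB1 : Measurable B1)
    (hind : IndepFun B B1 ℙ)
    (hlawB : Measure.map B ℙ = expMeasure μ)
    (hlawB1 : Measure.map B1 ℙ = expMeasure μ) :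
    ∫ ω, (∫ t : ℝ, (DPS (B ω) (B1 ω) t - B ω)) ∂ℙ = 1 / μ ^ 2 :=
  lightTraffic_PS_derivative_general μ hμ B B1 hind hlawB hlawB1
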